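/- (Maximal contact passes to the coefficient ideal.) Let k be a field of characteristic zero, I a nonzero ideal of R = k[x_1,…,x_n], and p ∈ k^n a point with ord_p(I) = a ≥ 1. Then in the localization of R at the maximal ideal m_p, the image of the ideal D^{a-1}(I) is contained in the image of the ideal D^{a!-1}(C(I,a)). In particular, if x ∈ D^{a-1}(I) satisfies (∂x/∂x_i)(p) ≠ 0 for some i (i.e. x is a maximal contact element for I at p), then x is a maximal contact element for C(I,a) at p: its image lies in the localization of D^{a!-1}(C(I,a)) at m_p and some first partial derivative of x does not vanish at p. -/

import Mathlib

open MvPolynomial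

/-- The derivative ideal: the ideal generated by `I` together with all first partial
derivatives of its elements. -/
noncomputable def derivIdeal {k : Type*} [CommSemiring k] {σ : Type*}
    (I : Ideal (MvPolynomial σ k)) : Ideal (MvPolynomial σ k) :=
  I ⊔ Ideal.span {g | ∃ f ∈ I, ∃ i : σ, g = pderiv i f}

/-- The order of a nonzero polynomial at a point `p`: the smallest total degree of a monomial
appearing in the shifted polynomial `f(x+p)`. -/
noncomputable def polyOrdAt {k : Type*} [CommSemiring k] {σ : Type*} (p : σ → k)
    (f : MvPolynomial σ k) : ℕ :=
  sInf {m | ∃ d ∈ (aeval (fun i => X i + C (p i)) f : MvPolynomial σ k).support,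
    (d.sum fun _ e => e) = m}

/-- The order of a nonzero ideal at a point: `min {ord_p f : 0 ≠ f ∈ I}`. -/
noncomputable def idealOrdAt {k : Type*} [CommSemiring k] {σ : Type*} (p : σ → k)
    (I : Ideal (MvPolynomial σ k)) : ℕ :=
  sInf {m | ∃ f ∈ I, f ≠ 0 ∧ polyOrdAt p f = m}

/-- The coefficient ideal `C(I,a) = Σ D^{a-1}(I)^{b₁} ⋯ D⁰(I)^{b_a}`, the sum running over
all tuples `(b₁,…,b_a)` of nonnegative integers with `Σ i·b_i ≥ a!`. -/
noncomputable def coeffIdeal {k : Type*} [CommSemiring k] {σ : Type*}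
    (I : Ideal (MvPolynomial σ k)) (a : ℕ) : Ideal (MvPolynomial σ k) :=
  ⨆ b : {b : Fin a → ℕ // Nat.factorial a ≤ ∑ i, (i.1 + 1) * b i},
    ∏ i : Fin a, (derivIdeal^[a - (i.1 + 1)] I) ^ (b.1 i)

/-- The maximal ideal `m_p` of polynomials vanishing at the point `p`. -/
noncomputable def vanishingIdeal {k : Type*} [Field k] {σ : Type*} (p : σ → k) :
    Ideal (MvPolynomial σ k) :=
  RingHom.ker (eval p)

instance vanishingIdeal_isMaximal {k : Type*} [Field k] {σ : Type*} (p : σ → k) :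
    (vanishingIdeal p).IsMaximal :=
  RingHom.ker_isMaximal_of_surjective _ fun c => ⟨C c, eval_C _⟩

/-!
Choose a maximal contact element `x ∈ J := D^{a-1}(I)`, i.e. `u := ∂ᵢx` with `u(p) ≠ 0`; it
exists because the Taylor expansion at `p` of some element of `I` has a monomial of degree `a`,
and `a - 1` partial derivatives take it down to a linear monomial.
Since `J^{a!} ⊆ C := C(I,a)`, the Leibniz rule `∂ᵢʲ(g xˢ⁺ʲ) ∈ c·g uʲ xˢ + (xˢ⁺¹)` with
`c = (s+j)!/s! ≠ 0` shows, after inverting `u`, first `x^{s+1} ∈ D^j(C)` for `j + s + 1 = a!`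
(by induction on `j`), and then `f ∈ D^{a!-1}(C)` for every `f ∈ J`, using `f x^{a!-1} ∈ C`.
-/

theorem Derivation.iterate_mul_pow_add {A R : Type*} [CommSemiring A] [CommSemiring R]
    [Algebra A R] (D : Derivation A R R) (g x : R) (s j : ℕ) :
    ∃ w, D^[j] (g * x ^ (s + j)) =
      ((s + j).descFactorial j : R) * g * D x ^ j * x ^ s + x ^ (s + 1) * w := by
  induction j generalizing s with
  | zero => exact ⟨0, by simp⟩
  | succ j ih =>
    obtain ⟨w, hw⟩ := ih (s + 1)
    refine ⟨((s + 1 + j).descFactorial j : R) * D (g * D x ^ j) + (s + 2) * D x * w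
      + x * D w, ?_⟩
    rw [Function.iterate_succ_apply', show s + (j + 1) = s + 1 + j by omega, hw,
      Nat.descFactorial_succ, show s + 1 + j - j = s + 1 by omega]
    simp only [map_add, Derivation.leibniz, Derivation.leibniz_pow, Derivation.map_natCast,
      smul_eq_mul, nsmul_eq_mul]
    push_cast
    ring

section CommSemiring

variable {k σ : Type*} [CommSemiring k]

theorem le_derivIdeal (I : Ideal (MvPolynomial σ k)) : I ≤ derivIdeal I :=
  le_sup_left

theorem pderiv_mem_derivIdeal {I : Ideal (MvPolynomial σ k)} {f : MvPolynomial σ k} (i : σ)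
    (hf : f ∈ I) : pderiv i f ∈ derivIdeal I :=
  Ideal.mem_sup_right (Ideal.subset_span ⟨f, hf, i, rfl⟩)

theorem monotone_iterate_derivIdeal (I : Ideal (MvPolynomial σ k)) :
    Monotone fun j => derivIdeal^[j] I :=
  monotone_nat_of_le_succ fun j => by
    rw [Function.iterate_succ_apply']
    exact le_derivIdeal _

theorem pderiv_mem_iterate_derivIdeal {I : Ideal (MvPolynomial σ k)} {f : MvPolynomial σ k}
    (i : σ) {r : ℕ} (hf : f ∈ derivIdeal^[r] I) : pderiv i f ∈ derivIdeal^[r + 1] I := by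
  rw [Function.iterate_succ_apply']
  exact pderiv_mem_derivIdeal i hf

theorem iterate_pderiv_mem_iterate_derivIdeal {I : Ideal (MvPolynomial σ k)}
    {f : MvPolynomial σ k} (i : σ) {r : ℕ} (hf : f ∈ derivIdeal^[r] I) (j : ℕ) :
    (pderiv i)^[j] f ∈ derivIdeal^[r + j] I := by
  induction j with
  | zero => exact hf
  | succ j ih =>
    rw [Function.iterate_succ_apply', ← add_assoc]
    exact pderiv_mem_iterate_derivIdeal i ih

theorem pow_factorial_le_coeffIdeal (I : Ideal (MvPolynomial σ k)) {a : ℕ} (ha : 1 ≤ a) :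
    (derivIdeal^[a - 1] I) ^ a.factorial ≤ coeffIdeal I a := by
  let i₀ : Fin a := ⟨0, ha⟩
  let b : Fin a → ℕ := Pi.single i₀ a.factorial
  have hb : a.factorial ≤ ∑ i, (i.1 + 1) * b i := by
    rw [Fintype.sum_eq_single i₀ fun i hi => by simp [b, hi]]
    simp [b, i₀]
  have hprod : ∏ i : Fin a, (derivIdeal^[a - (i.1 + 1)] I) ^ b i =
      (derivIdeal^[a - 1] I) ^ a.factorial := by
    rw [Fintype.prod_eq_single i₀ fun i hi => by simp [b, hi]]
    simp [b, i₀]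
  rw [← hprod]
  exact le_iSup (fun b : {b : Fin a → ℕ // a.factorial ≤ ∑ i, (i.1 + 1) * b i} =>
    ∏ i : Fin a, (derivIdeal^[a - (i.1 + 1)] I) ^ b.1 i) ⟨b, hb⟩

theorem pderiv_aeval_X_add_C (p : σ → k) (i : σ) (f : MvPolynomial σ k) :
    pderiv i (aeval (fun j => X j + C (p j)) f) = aeval (fun j => X j + C (p j)) (pderiv i f) := by
  classical
  induction f using MvPolynomial.induction_on with
  | C c => simp
  | add f g hf hg => simp only [map_add, hf, hg]
  | mul_X f j hf =>
    simp only [map_mul, pderiv_mul, hf, aeval_X, map_add, pderiv_C, add_zero, pderiv_X]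
    rcases eq_or_ne i j with rfl | hij
    · simp only [Pi.single_eq_same, map_one]
    · simp only [Pi.single_eq_of_ne' hij, map_zero]

theorem constantCoeff_aeval_X_add_C (p : σ → k) (f : MvPolynomial σ k) :
    constantCoeff (aeval (fun j => X j + C (p j)) f) = eval p f := by
  induction f using MvPolynomial.induction_on with
  | C c => simp
  | add f g hf hg => simp only [map_add, hf, hg]
  | mul_X f j hf =>
    simp only [map_mul, hf, aeval_X, map_add, constantCoeff_X, constantCoeff_C, zero_add,
      eval_X]

end CommSemiring

section maximalContact

variable {k σ : Type*} [CommRing k] [IsDomain k] [CharZero k]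

theorem exists_mem_support_aeval_X_add_C_pderiv {p : σ → k} {g : MvPolynomial σ k}
    {d : σ →₀ ℕ} (hd : d ∈ (aeval (fun j => X j + C (p j)) g).support) (hd0 : d ≠ 0) :
    ∃ i, ∃ e ∈ (aeval (fun j => X j + C (p j)) (pderiv i g)).support,
      e.degree + 1 = d.degree := by
  obtain ⟨i, hi⟩ : ∃ i, d i ≠ 0 := by simpa using Finsupp.ne_iff.mp hd0
  have hcancel := Finsupp.sub_add_single_one_cancel hi
  refine ⟨i, d - Finsupp.single i 1, ?_, ?_⟩
  · rw [mem_support_iff, ← pderiv_aeval_X_add_C, coeff_pderiv, hcancel]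
    exact mul_ne_zero (mem_support_iff.mp hd) (Nat.cast_add_one_ne_zero _)
  · conv_rhs => rw [← hcancel]
    simp

theorem exists_mem_iterate_derivIdeal_eval_pderiv_ne_zero {I : Ideal (MvPolynomial σ k)}
    {p : σ → k} {r t : ℕ} {g : MvPolynomial σ k} (hg : g ∈ derivIdeal^[r] I) {d : σ →₀ ℕ}
    (hd : d ∈ (aeval (fun j => X j + C (p j)) g).support) (hdeg : d.degree = t + 1) :
    ∃ x ∈ derivIdeal^[r + t] I, ∃ i, eval p (pderiv i x) ≠ 0 := by
  induction t generalizing r g d with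
  | zero =>
    obtain ⟨i, e, he, hedeg⟩ :=
      exists_mem_support_aeval_X_add_C_pderiv hd (by rintro rfl; simp at hdeg)
    obtain rfl : e = 0 := (Finsupp.degree_eq_zero_iff e).mp (by omega)
    refine ⟨g, hg, i, ?_⟩
    rwa [← constantCoeff_aeval_X_add_C, constantCoeff_eq, ← mem_support_iff]
  | succ t ih =>
    obtain ⟨i, e, he, hedeg⟩ :=
      exists_mem_support_aeval_X_add_C_pderiv hd (by rintro rfl; simp at hdeg)
    obtain ⟨x, hx, hxi⟩ := ih (pderiv_mem_iterate_derivIdeal i hg) he (by omega)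
    exact ⟨x, by rwa [add_right_comm] at hx, hxi⟩

theorem exists_mem_iterate_derivIdeal_eval_pderiv_ne_zero_of_idealOrdAt
    {I : Ideal (MvPolynomial σ k)} {p : σ → k} {a : ℕ}
    (ha : 1 ≤ a) (hord : idealOrdAt p I = a) :
    ∃ x ∈ derivIdeal^[a - 1] I, ∃ i, eval p (pderiv i x) ≠ 0 := by
  -- `sInf ∅ = 0` in `ℕ`, so `1 ≤ a` forces both infima to be attained.
  obtain ⟨f, hf, -, hford⟩ : ∃ f ∈ I, f ≠ 0 ∧ polyOrdAt p f = a :=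
    hord ▸ Nat.sInf_mem (Nat.nonempty_of_pos_sInf (hord ▸ ha))
  obtain ⟨d, hd, hdeg⟩ : ∃ d ∈ (aeval (fun j => X j + C (p j)) f).support,
      (d.sum fun _ e => e) = a :=
    hford ▸ Nat.sInf_mem (Nat.nonempty_of_pos_sInf (hford ▸ ha))
  have := exists_mem_iterate_derivIdeal_eval_pderiv_ne_zero (r := 0) (t := a - 1)
    (by simpa using hf) hd (by rw [Finsupp.degree_apply]; exact hdeg.trans (by omega))
  rwa [zero_add] at this

end maximalContact

section localization

variable {k σ : Type*} [Field k] {p : σ → k}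

theorem isUnit_algebraMap_localization_of_eval_ne_zero {q : MvPolynomial σ k}
    (hq : eval p q ≠ 0) :
    IsUnit (algebraMap (MvPolynomial σ k) (Localization.AtPrime (vanishingIdeal p)) q) :=
  IsLocalization.map_units _ (⟨q, hq⟩ : (vanishingIdeal p).primeCompl)

variable [CharZero k]

theorem algebraMap_mul_pow_mem_map_iterate_derivIdeal {C : Ideal (MvPolynomial σ k)}
    {x g : MvPolynomial σ k} {i : σ} (hx : eval p (pderiv i x) ≠ 0) {s j : ℕ}
    (hxs : algebraMap _ (Localization.AtPrime (vanishingIdeal p)) (x ^ (s + 1)) ∈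
      (derivIdeal^[j] C).map (algebraMap _ _))
    (hg : g * x ^ (s + j) ∈ C) :
    algebraMap _ (Localization.AtPrime (vanishingIdeal p)) (g * x ^ s) ∈
      (derivIdeal^[j] C).map (algebraMap _ _) := by
  obtain ⟨w, hw⟩ := (pderiv i).iterate_mul_pow_add g x s j
  have hmem := Ideal.mem_map_of_mem (algebraMap _ (Localization.AtPrime (vanishingIdeal p)))
    (iterate_pderiv_mem_iterate_derivIdeal i (r := 0) hg j)
  rw [zero_add, hw, map_add, map_mul _ (x ^ (s + 1)),
    Ideal.add_mem_iff_left _ (Ideal.mul_mem_right _ _ hxs),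
    show ((s + j).descFactorial j : MvPolynomial σ k) * g * pderiv i x ^ j * x ^ s =
      ((s + j).descFactorial j * pderiv i x ^ j) * (g * x ^ s) by ring, map_mul,
    Ideal.unit_mul_mem_iff_mem _ (isUnit_algebraMap_localization_of_eval_ne_zero _)] at hmem
  · exact hmem
  · simp [Nat.descFactorial_eq_zero_iff_lt, hx]

theorem algebraMap_pow_mem_map_iterate_derivIdeal {C : Ideal (MvPolynomial σ k)}
    {x : MvPolynomial σ k} {i : σ} (hx : eval p (pderiv i x) ≠ 0) (j : ℕ) {s : ℕ}
    (hC : x ^ (j + s + 1) ∈ C) :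
    algebraMap _ (Localization.AtPrime (vanishingIdeal p)) (x ^ (s + 1)) ∈
      (derivIdeal^[j] C).map (algebraMap _ _) := by
  induction j generalizing s with
  | zero => exact Ideal.mem_map_of_mem _ (by simpa using hC)
  | succ j ih =>
    have hxs := Ideal.map_mono (monotone_iterate_derivIdeal C j.le_succ)
      (ih (s := s + 1) (by rwa [show j + (s + 1) + 1 = j + 1 + s + 1 by omega]))
    simpa using algebraMap_mul_pow_mem_map_iterate_derivIdeal (g := 1) hx hxs
      (by rwa [one_mul, show s + 1 + (j + 1) = j + 1 + s + 1 by omega])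

theorem map_le_map_iterate_derivIdeal_of_pow_le {J C : Ideal (MvPolynomial σ k)}
    {x : MvPolynomial σ k} (hxJ : x ∈ J) {i : σ} (hx : eval p (pderiv i x) ≠ 0) {m : ℕ}
    (hJC : J ^ (m + 1) ≤ C) :
    J.map (algebraMap _ (Localization.AtPrime (vanishingIdeal p))) ≤
      (derivIdeal^[m] C).map (algebraMap _ _) := by
  refine Ideal.map_le_iff_le_comap.mpr fun f hf => ?_
  have hx1 := algebraMap_pow_mem_map_iterate_derivIdeal hx m (s := 0)
    (hJC (Ideal.pow_mem_pow hxJ _))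
  have hfx : f * x ^ (0 + m) ∈ C :=
    hJC (by rw [pow_succ', zero_add]; exact Ideal.mul_mem_mul hf (Ideal.pow_mem_pow hxJ m))
  simpa using algebraMap_mul_pow_mem_map_iterate_derivIdeal hx hx1 hfx

end localization

theorem maximal_contact_coeffIdeal_general {k : Type*} [Field k] [CharZero k] {n : ℕ}
    (I : Ideal (MvPolynomial (Fin n) k)) (p : Fin n → k) (a : ℕ)
    (ha : 1 ≤ a) (hord : idealOrdAt p I = a) :
    Ideal.map (algebraMap (MvPolynomial (Fin n) k)
        (Localization.AtPrime (vanishingIdeal p))) (derivIdeal^[a - 1] I) ≤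
      Ideal.map (algebraMap (MvPolynomial (Fin n) k)
        (Localization.AtPrime (vanishingIdeal p)))
        (derivIdeal^[Nat.factorial a - 1] (coeffIdeal I a)) ∧
    ∀ x ∈ derivIdeal^[a - 1] I, (∃ i : Fin n, eval p (pderiv i x) ≠ 0) →
      (algebraMap (MvPolynomial (Fin n) k) (Localization.AtPrime (vanishingIdeal p)) x ∈
        Ideal.map (algebraMap (MvPolynomial (Fin n) k)
          (Localization.AtPrime (vanishingIdeal p)))
          (derivIdeal^[Nat.factorial a - 1] (coeffIdeal I a)) ∧
      ∃ i : Fin n, eval p (pderiv i x) ≠ 0) := by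
  obtain ⟨x, hxJ, i, hxi⟩ :=
    exists_mem_iterate_derivIdeal_eval_pderiv_ne_zero_of_idealOrdAt ha hord
  have hJC : (derivIdeal^[a - 1] I) ^ (a.factorial - 1 + 1) ≤ coeffIdeal I a := by
    rw [Nat.sub_add_cancel a.factorial_pos]
    exact pow_factorial_le_coeffIdeal I ha
  have key := map_le_map_iterate_derivIdeal_of_pow_le hxJ hxi hJC
  exact ⟨key, fun y hy hyi => ⟨key (Ideal.mem_map_of_mem _ hy), hyi⟩⟩

/-- Maximal contact passes to the coefficient ideal: if `ord_p(I) = a ≥ 1`, then in the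
localization of `R` at `m_p` the image of `D^{a-1}(I)` is contained in the image of
`D^{a!-1}(C(I,a))`; in particular a maximal contact element `x` for `I` at `p` is a maximal
contact element for `C(I,a)` at `p`. -/
theorem maximal_contact_coeffIdeal {k : Type*} [Field k] [CharZero k] {n : ℕ}
    (I : Ideal (MvPolynomial (Fin n) k)) (hI : I ≠ ⊥) (p : Fin n → k) (a : ℕ)
    (ha : 1 ≤ a) (hord : idealOrdAt p I = a) :
    Ideal.map (algebraMap (MvPolynomial (Fin n) k)
        (Localization.AtPrime (vanishingIdeal p))) (derivIdeal^[a - 1] I) ≤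
      Ideal.map (algebraMap (MvPolynomial (Fin n) k)
        (Localization.AtPrime (vanishingIdeal p)))
        (derivIdeal^[Nat.factorial a - 1] (coeffIdeal I a)) ∧
    ∀ x ∈ derivIdeal^[a - 1] I, (∃ i : Fin n, eval p (pderiv i x) ≠ 0) →
      (algebraMap (MvPolynomial (Fin n) k) (Localization.AtPrime (vanishingIdeal p)) x ∈
        Ideal.map (algebraMap (MvPolynomial (Fin n) k)
          (Localization.AtPrime (vanishingIdeal p)))
          (derivIdeal^[Nat.factorial a - 1] (coeffIdeal I a)) ∧
      ∃ i : Fin n, eval p (pderiv i x) ≠ 0) :=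
  maximal_contact_coeffIdeal_general I p a ha hord
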